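/- arXiv:1904.12141 — 2 statements merged into one kernel-verified Lean document; each statement's English description precedes it below -/
import Mathlib

section
/- Let G be a connected graph with d*(G) ≥ 3 containing a pendant path u₁u₂u₃v with d(u₁) = 1, d(u₂) = d(u₃) = 2, and d(v) ≥ 3. Let G' = G − {u₁, u₂, u₃}. Then G' is connected, γ₂(G) ≤ γ₂(G') + 2, and a(G) ≥ a(G') + 2; hence γ₂(G') ≤ a(G') + 1 implies γ₂(G) ≤ a(G) + 1. -/
/-!
Deleting the path removes exactly the three edges `u₁u₂`, `u₂u₃`, `u₃v`, and every remaining vertex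
other than `v` keeps all its neighbours, so `G'` stays connected and only `v` loses one degree.
A 2-dominating set of `G'` together with `u₁, u₃` 2-dominates `u₂`.
A maximum annihilation set `S'` of `G'` lifts to an annihilation set of `G` with two more vertices:
if `v ∉ S'` add `u₁, u₂` (degree sum 3), otherwise trade `v` (degree at least 2 in `G'`) for
`u₁, u₂, u₃` (degree sum 5); in both cases the degree budget grows by the 3 deleted edges.
-/

open Classical Finset
noncomputable section

/-- `S` is a 2-dominating set of `G`: every vertex outside `S` has ≥ 2 neighbors in `S`. -/
def IsTwoDomSet {V : Type*} [Fintype V] (G : SimpleGraph V) (S : Finset V) : Prop :=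
  ∀ v, v ∉ S → 2 ≤ (G.neighborFinset v ∩ S).card

/-- The 2-domination number. -/
noncomputable def gamma2 {V : Type*} [Fintype V] (G : SimpleGraph V) : ℕ :=
  sInf {k | ∃ S : Finset V, IsTwoDomSet G S ∧ S.card = k}

/-- `S` is an annihilation set of `G`: the sum of degrees over `S` is at most `m(G)`. -/
def IsAnnSet {V : Type*} [Fintype V] (G : SimpleGraph V) (S : Finset V) : Prop :=
  ∑ v ∈ S, G.degree v ≤ G.edgeFinset.card

/-- The annihilation number: the largest size of an annihilation set (equivalently, the
largest `k` such that the sum of the `k` smallest degrees is at most the edge count). -/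
noncomputable def annihilation {V : Type*} [Fintype V] (G : SimpleGraph V) : ℕ :=
  sSup {k | ∃ S : Finset V, IsAnnSet G S ∧ S.card = k}

section

variable {V : Type*}

namespace SimpleGraph

lemma Connected.induce_of_forall_adj_mem {G : SimpleGraph V} (hG : G.Connected) {s : Set V}
    {v : V} (hv : v ∈ s) (hs : ∀ w ∈ s, w ≠ v → ∀ x, G.Adj w x → x ∈ s) :
    (G.induce s).Connected := by
  have reach : ∀ w (p : G.Walk w v) (hw : w ∈ s), (G.induce s).Reachable ⟨w, hw⟩ ⟨v, hv⟩ := by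
    intro w p
    induction p with
    | nil => exact fun _ ↦ .rfl
    | @cons w y u hwy q ih =>
      intro hw
      by_cases hwu : w = u
      · subst hwu; rfl
      · have hy := hs w hw hwu y hwy
        exact (show (G.induce s).Adj ⟨w, hw⟩ ⟨y, hy⟩ from hwy).reachable.trans (ih hv hs hy)
  have : Nonempty s := ⟨⟨v, hv⟩⟩
  exact ⟨fun a b ↦ (reach a (hG.preconnected a v).some a.2).trans
    (reach b (hG.preconnected b v).some b.2).symm⟩

end SimpleGraph

variable [Fintype V]

lemma gamma2_le_card {G : SimpleGraph V} {S : Finset V} (hS : IsTwoDomSet G S) :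
    gamma2 G ≤ #S :=
  Nat.sInf_le ⟨S, hS, rfl⟩

lemma exists_isTwoDomSet_card_eq_gamma2 (G : SimpleGraph V) :
    ∃ S, IsTwoDomSet G S ∧ #S = gamma2 G :=
  Nat.sInf_mem (s := {k | ∃ S, IsTwoDomSet G S ∧ #S = k})
    ⟨_, univ, fun v hv ↦ absurd (mem_univ v) hv, rfl⟩

lemma IsTwoDomSet.map_subtype_union {G : SimpleGraph V} {s : Set V} [DecidablePred (· ∈ s)]
    {S : Finset s} (hS : IsTwoDomSet (G.induce s) S) {A : Finset V}
    (hA : ∀ x ∉ s, x ∉ A → 2 ≤ #(G.neighborFinset x ∩ A)) :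
    IsTwoDomSet G (S.map (.subtype _) ∪ A) := by
  intro x hx
  rw [mem_union, not_or] at hx
  by_cases hxs : x ∈ s
  · have hxS : ⟨x, hxs⟩ ∉ S := fun h ↦ hx.1 (mem_map_of_mem _ h)
    refine (hS _ hxS).trans (card_le_card_of_injOn Subtype.val ?_ Subtype.val_injective.injOn)
    intro b hb
    simp only [coe_inter, Set.mem_inter_iff, mem_coe, SimpleGraph.mem_neighborFinset] at hb ⊢
    exact ⟨hb.1, mem_union_left _ (mem_map_of_mem _ hb.2)⟩
  · exact (hA x hxs hx.2).trans (card_le_card (inter_subset_inter_left subset_union_right))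

lemma gamma2_le_gamma2_induce_add (G : SimpleGraph V) (s : Set V) [DecidablePred (· ∈ s)]
    {A : Finset V} (hA : ∀ x ∉ s, x ∉ A → 2 ≤ #(G.neighborFinset x ∩ A)) :
    gamma2 G ≤ gamma2 (G.induce s) + #A := by
  obtain ⟨S, hS, hcard⟩ := exists_isTwoDomSet_card_eq_gamma2 (G.induce s)
  calc gamma2 G ≤ #(S.map (.subtype _) ∪ A) := gamma2_le_card (hS.map_subtype_union hA)
    _ ≤ #S + #A := (card_union_le _ _).trans_eq (by rw [card_map])
    _ = gamma2 (G.induce s) + #A := by rw [hcard]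

/-- `IsAnnSet` is elaborated with the classical `DecidableRel` instance; this restates it for any
instance, such as the one inferred for an induced subgraph. -/
lemma isAnnSet_iff_sum_degree_le {G : SimpleGraph V} [DecidableRel G.Adj] {S : Finset V} :
    IsAnnSet G S ↔ ∑ v ∈ S, G.degree v ≤ #G.edgeFinset := by
  unfold IsAnnSet
  convert Iff.rfl

lemma bddAbove_card_isAnnSet (G : SimpleGraph V) :
    BddAbove {k | ∃ S, IsAnnSet G S ∧ #S = k} :=
  ⟨Fintype.card V, by rintro _ ⟨S, -, rfl⟩; exact card_le_univ S⟩

lemma card_le_annihilation {G : SimpleGraph V} {S : Finset V} (hS : IsAnnSet G S) :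
    #S ≤ annihilation G :=
  le_csSup (bddAbove_card_isAnnSet G) ⟨S, hS, rfl⟩

lemma exists_isAnnSet_card_eq_annihilation (G : SimpleGraph V) :
    ∃ S, IsAnnSet G S ∧ #S = annihilation G :=
  Nat.sSup_mem (s := {k | ∃ S, IsAnnSet G S ∧ #S = k}) ⟨0, ∅, by simp [IsAnnSet], rfl⟩
    (bddAbove_card_isAnnSet G)

lemma card_add_card_le_annihilation {G : SimpleGraph V} {s : Set V} [DecidablePred (· ∈ s)]
    {S : Finset s} {P : Finset V} (hdeg : ∀ a ∈ S, (G.induce s).degree a = G.degree a)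
    (hP : ∀ x ∈ P, x ∉ s)
    (hsum : ∑ a ∈ S, (G.induce s).degree a + ∑ x ∈ P, G.degree x ≤ #G.edgeFinset) :
    #S + #P ≤ annihilation G := by
  have hdisj : Disjoint (S.map (.subtype _)) P := by
    rw [disjoint_left]
    rintro _ hx hxP
    obtain ⟨a, -, rfl⟩ := mem_map.1 hx
    exact hP _ hxP a.2
  have hsumS : ∑ x ∈ S.map (.subtype _), G.degree x = ∑ a ∈ S, (G.induce s).degree a := by
    rw [sum_map]
    exact sum_congr rfl fun a ha ↦ (hdeg a ha).symm
  have hann : IsAnnSet G (S.map (.subtype _) ∪ P) := by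
    rwa [IsAnnSet, sum_union hdisj, hsumS]
  simpa only [card_union_of_disjoint hdisj, card_map] using card_le_annihilation hann

namespace SimpleGraph

lemma degree_induce_add_card_filter_notMem (G : SimpleGraph V) (s : Set V)
    [DecidablePred (· ∈ s)] (a : s) :
    (G.induce s).degree a + #{x ∈ G.neighborFinset a | x ∉ s} = G.degree a := by
  rw [← card_neighborFinset_eq_degree, ← card_map (.subtype _), map_neighborFinset_induce,
    ← card_neighborFinset_eq_degree,
    ← card_filter_add_card_filter_not (s := G.neighborFinset a) (· ∈ s)]
  congr 2
  ext
  simp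

end SimpleGraph

structure IsPendantPath (G : SimpleGraph V) (u₁ u₂ u₃ v : V) : Prop where
  adj₁₂ : G.Adj u₁ u₂
  adj₂₃ : G.Adj u₂ u₃
  adj₃v : G.Adj u₃ v
  degree_u₁ : G.degree u₁ = 1
  degree_u₂ : G.degree u₂ = 2
  degree_u₃ : G.degree u₃ = 2

namespace IsPendantPath

variable {G : SimpleGraph V} {u₁ u₂ u₃ v : V}

lemma ne₁₃ (hP : IsPendantPath G u₁ u₂ u₃ v) : u₁ ≠ u₃ :=
  ne_of_apply_ne (G.degree ·) (by simp only [hP.degree_u₁, hP.degree_u₃]; decide)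

lemma ne_v₁ (hP : IsPendantPath G u₁ u₂ u₃ v) (hv : 3 ≤ G.degree v) : v ≠ u₁ :=
  ne_of_apply_ne (G.degree ·) (by simp only [hP.degree_u₁]; omega)

lemma ne_v₂ (hP : IsPendantPath G u₁ u₂ u₃ v) (hv : 3 ≤ G.degree v) : v ≠ u₂ :=
  ne_of_apply_ne (G.degree ·) (by simp only [hP.degree_u₂]; omega)

lemma v_mem_compl (hP : IsPendantPath G u₁ u₂ u₃ v) (hv : 3 ≤ G.degree v) :
    v ∈ ({u₁, u₂, u₃}ᶜ : Set V) := by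
  simp [hP.ne_v₁ hv, hP.ne_v₂ hv, hP.adj₃v.ne']

lemma neighborFinset_u₁ (hP : IsPendantPath G u₁ u₂ u₃ v) : G.neighborFinset u₁ = {u₂} :=
  (eq_of_subset_of_card_le (by simpa using hP.adj₁₂) (by simp [hP.degree_u₁])).symm

lemma neighborFinset_u₂ (hP : IsPendantPath G u₁ u₂ u₃ v) :
    G.neighborFinset u₂ = {u₁, u₃} :=
  (eq_of_subset_of_card_le (by simp [insert_subset_iff, hP.adj₁₂.symm, hP.adj₂₃])
    (by simp [hP.degree_u₂, card_pair hP.ne₁₃])).symm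

lemma neighborFinset_u₃ (hP : IsPendantPath G u₁ u₂ u₃ v) (hv : 3 ≤ G.degree v) :
    G.neighborFinset u₃ = {u₂, v} :=
  (eq_of_subset_of_card_le (by simp [insert_subset_iff, hP.adj₂₃.symm, hP.adj₃v])
    (by simp [hP.degree_u₃, card_pair (hP.ne_v₂ hv).symm])).symm

lemma adj_u₁_iff (hP : IsPendantPath G u₁ u₂ u₃ v) {x : V} : G.Adj u₁ x ↔ x = u₂ := by
  rw [← SimpleGraph.mem_neighborFinset, hP.neighborFinset_u₁, mem_singleton]

lemma adj_u₂_iff (hP : IsPendantPath G u₁ u₂ u₃ v) {x : V} : G.Adj u₂ x ↔ x = u₁ ∨ x = u₃ := by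
  rw [← SimpleGraph.mem_neighborFinset, hP.neighborFinset_u₂, mem_insert, mem_singleton]

lemma adj_u₃_iff (hP : IsPendantPath G u₁ u₂ u₃ v) (hv : 3 ≤ G.degree v) {x : V} :
    G.Adj u₃ x ↔ x = u₂ ∨ x = v := by
  rw [← SimpleGraph.mem_neighborFinset, hP.neighborFinset_u₃ hv, mem_insert, mem_singleton]

lemma mem_compl_of_adj (hP : IsPendantPath G u₁ u₂ u₃ v) (hv : 3 ≤ G.degree v) {w x : V}
    (hw : w ∈ ({u₁, u₂, u₃}ᶜ : Set V)) (hwv : w ≠ v) (hwx : G.Adj w x) :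
    x ∈ ({u₁, u₂, u₃}ᶜ : Set V) := by
  have h₁ := hP.adj_u₁_iff (x := w)
  have h₂ := hP.adj_u₂_iff (x := w)
  have h₃ := hP.adj_u₃_iff hv (x := w)
  simp only [Set.mem_compl_iff, Set.mem_insert_iff, Set.mem_singleton_iff] at hw ⊢
  rintro (rfl | rfl | rfl) <;> grind [hwx.symm]

lemma card_filter_neighborFinset_notMem (hP : IsPendantPath G u₁ u₂ u₃ v)
    (hv : 3 ≤ G.degree v) (a : ({u₁, u₂, u₃}ᶜ : Set V)) :
    #{x ∈ G.neighborFinset a | x ∉ ({u₁, u₂, u₃}ᶜ : Set V)} = if (a : V) = v then 1 else 0 := by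
  split_ifs with hav
  · rw [card_eq_one]
    refine ⟨u₃, ?_⟩
    ext x
    have := hP.v_mem_compl hv
    have h₁ := hP.adj_u₁_iff (x := v)
    have h₂ := hP.adj_u₂_iff (x := v)
    simp only [Set.mem_compl_iff, Set.mem_insert_iff, Set.mem_singleton_iff, not_not,
      mem_filter, SimpleGraph.mem_neighborFinset, mem_singleton, hav] at this ⊢
    constructor
    · rintro ⟨hvx, rfl | rfl | rfl⟩ <;> grind [hvx.symm]
    · rintro rfl
      exact ⟨hP.adj₃v.symm, by simp⟩
  · rw [card_eq_zero, filter_eq_empty_iff]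
    exact fun x hx ↦
      not_not.2 (hP.mem_compl_of_adj hv a.2 hav ((SimpleGraph.mem_neighborFinset _ _ _).1 hx))

lemma degree_induce_add_ite (hP : IsPendantPath G u₁ u₂ u₃ v) (hv : 3 ≤ G.degree v)
    (a : ({u₁, u₂, u₃}ᶜ : Set V)) :
    (G.induce {u₁, u₂, u₃}ᶜ).degree a + (if (a : V) = v then 1 else 0) = G.degree a := by
  rw [← hP.card_filter_neighborFinset_notMem hv]
  exact G.degree_induce_add_card_filter_notMem _ a

lemma sum_degree_path (hP : IsPendantPath G u₁ u₂ u₃ v) :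
    ∑ x ∈ {u₁, u₂, u₃}, G.degree x = 5 := by
  rw [sum_insert (by simp [hP.adj₁₂.ne, hP.ne₁₃]), sum_pair hP.adj₂₃.ne, hP.degree_u₁,
    hP.degree_u₂, hP.degree_u₃]
  rfl

lemma card_edgeFinset_eq_add_three (hP : IsPendantPath G u₁ u₂ u₃ v) (hv : 3 ≤ G.degree v) :
    #G.edgeFinset = #(G.induce {u₁, u₂, u₃}ᶜ).edgeFinset + 3 := by
  have hcompl : ∑ x ∈ {u₁, u₂, u₃}ᶜ, G.degree x = ∑ a : ({u₁, u₂, u₃}ᶜ : Set V), G.degree a :=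
    sum_subtype _ (by simp) _
  have hinduce : ∑ a : ({u₁, u₂, u₃}ᶜ : Set V), G.degree a
      = 2 * #(G.induce {u₁, u₂, u₃}ᶜ).edgeFinset + 1 := by
    rw [← sum_congr rfl fun a _ ↦ hP.degree_induce_add_ite hv a, sum_add_distrib,
      SimpleGraph.sum_degrees_eq_twice_card_edges]
    simp only [sum_boole, Nat.cast_id]
    congr 1
    exact card_eq_one.2 ⟨⟨v, hP.v_mem_compl hv⟩, by ext; simp [Subtype.ext_iff]⟩
  have := G.sum_degrees_eq_twice_card_edges
  rw [← sum_add_sum_compl {u₁, u₂, u₃}, hP.sum_degree_path, hcompl, hinduce] at this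
  omega

lemma induce_connected (hP : IsPendantPath G u₁ u₂ u₃ v) (hv : 3 ≤ G.degree v)
    (hG : G.Connected) : (G.induce {u₁, u₂, u₃}ᶜ).Connected :=
  hG.induce_of_forall_adj_mem (hP.v_mem_compl hv) fun _ hw hwv _ ↦ hP.mem_compl_of_adj hv hw hwv

lemma gamma2_le_gamma2_induce_add_two (hP : IsPendantPath G u₁ u₂ u₃ v) :
    gamma2 G ≤ gamma2 (G.induce {u₁, u₂, u₃}ᶜ) + 2 := by
  refine (gamma2_le_gamma2_induce_add G _ (A := {u₁, u₃}) ?_).trans_eq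
    (by rw [card_pair hP.ne₁₃])
  intro x hx hxA
  obtain rfl : x = u₂ := by simp_all
  rw [hP.neighborFinset_u₂, inter_self, card_pair hP.ne₁₃]

lemma annihilation_induce_add_two_le (hP : IsPendantPath G u₁ u₂ u₃ v) (hv : 3 ≤ G.degree v) :
    annihilation (G.induce {u₁, u₂, u₃}ᶜ) + 2 ≤ annihilation G := by
  obtain ⟨S, hS, hcard⟩ := exists_isAnnSet_card_eq_annihilation (G.induce {u₁, u₂, u₃}ᶜ)
  rw [isAnnSet_iff_sum_degree_le] at hS
  have hm := hP.card_edgeFinset_eq_add_three hv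
  set v' : ({u₁, u₂, u₃}ᶜ : Set V) := ⟨v, hP.v_mem_compl hv⟩
  have hdeg : ∀ a ∈ S.erase v', (G.induce {u₁, u₂, u₃}ᶜ).degree a = G.degree a := by
    intro a ha
    have hav : (a : V) ≠ v := fun h ↦ ne_of_mem_erase ha (Subtype.ext h)
    simpa [hav] using hP.degree_induce_add_ite hv a
  have hdeg_v : (G.induce {u₁, u₂, u₃}ᶜ).degree v' + 1 = G.degree v := by
    have := hP.degree_induce_add_ite hv v'
    rwa [if_pos rfl] at this
  by_cases hvS : v' ∈ S
  · have hsum := sum_erase_add S (fun a ↦ (G.induce {u₁, u₂, u₃}ᶜ).degree a) hvS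
    have := card_add_card_le_annihilation hdeg (P := {u₁, u₂, u₃}) (by simp)
      (by rw [hP.sum_degree_path]; omega)
    rw [card_erase_of_mem hvS, card_insert_of_notMem (by simp [hP.adj₁₂.ne, hP.ne₁₃]),
      card_pair hP.adj₂₃.ne] at this
    have := card_pos.2 ⟨_, hvS⟩
    omega
  · rw [erase_eq_of_notMem hvS] at hdeg
    have := card_add_card_le_annihilation hdeg (P := {u₁, u₂}) (by simp)
      (by rw [sum_pair hP.adj₁₂.ne, hP.degree_u₁, hP.degree_u₂]; omega)
    rw [card_pair hP.adj₁₂.ne] at this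
    omega

end IsPendantPath

end

theorem stmt6_general {V : Type*} [Fintype V] (G : SimpleGraph V) (hconn : G.Connected)
    (u₁ u₂ u₃ v : V)
    (hp1 : G.Adj u₁ u₂) (hp2 : G.Adj u₂ u₃) (hp3 : G.Adj u₃ v)
    (hd1 : G.degree u₁ = 1) (hd2 : G.degree u₂ = 2) (hd3 : G.degree u₃ = 2)
    (hdv : 3 ≤ G.degree v) :
    (G.induce ({u₁, u₂, u₃}ᶜ : Set V)).Connected ∧
    gamma2 G ≤ gamma2 (G.induce ({u₁, u₂, u₃}ᶜ : Set V)) + 2 ∧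
    annihilation (G.induce ({u₁, u₂, u₃}ᶜ : Set V)) + 2 ≤ annihilation G ∧
    (gamma2 (G.induce ({u₁, u₂, u₃}ᶜ : Set V)) ≤
        annihilation (G.induce ({u₁, u₂, u₃}ᶜ : Set V)) + 1 →
      gamma2 G ≤ annihilation G + 1) := by
  have hP : IsPendantPath G u₁ u₂ u₃ v := ⟨hp1, hp2, hp3, hd1, hd2, hd3⟩
  have hγ := hP.gamma2_le_gamma2_induce_add_two
  have hann := hP.annihilation_induce_add_two_le hdv
  exact ⟨hP.induce_connected hdv hconn, hγ, hann, fun h ↦ by omega⟩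

/-- Lemma 3.2(iii): removing a pendant path `u₁u₂u₃` attached at a vertex `v` of degree ≥ 3. -/
theorem stmt6 {V : Type*} [Fintype V] (G : SimpleGraph V) (hconn : G.Connected)
    (hstar : ∀ S : Finset V, IsAnnSet G S → S.card = annihilation G →
        ∀ w ∉ S, 3 ≤ G.degree w)
    (u₁ u₂ u₃ v : V)
    (h12 : u₁ ≠ u₂) (h13 : u₁ ≠ u₃) (h23 : u₂ ≠ u₃)
    (hv1 : v ≠ u₁) (hv2 : v ≠ u₂) (hv3 : v ≠ u₃)
    (hp1 : G.Adj u₁ u₂) (hp2 : G.Adj u₂ u₃) (hp3 : G.Adj u₃ v)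
    (hd1 : G.degree u₁ = 1) (hd2 : G.degree u₂ = 2) (hd3 : G.degree u₃ = 2)
    (hdv : 3 ≤ G.degree v) :
    (G.induce ({u₁, u₂, u₃}ᶜ : Set V)).Connected ∧
    gamma2 G ≤ gamma2 (G.induce ({u₁, u₂, u₃}ᶜ : Set V)) + 2 ∧
    annihilation (G.induce ({u₁, u₂, u₃}ᶜ : Set V)) + 2 ≤ annihilation G ∧
    (gamma2 (G.induce ({u₁, u₂, u₃}ᶜ : Set V)) ≤
        annihilation (G.induce ({u₁, u₂, u₃}ᶜ : Set V)) + 1 →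
      gamma2 G ≤ annihilation G + 1) :=
  stmt6_general G hconn u₁ u₂ u₃ v hp1 hp2 hp3 hd1 hd2 hd3 hdv
end
end

section
/- For t ≥ 4, the graph G = G(t; 1,…,1) (with all k_i = 1) satisfies a(G) = 4t + ⌊2t/3⌋ and γ₂(G) = 5t, so that γ₂(G) − a(G) = ⌈t/3⌉. -/
open Classical Finset
noncomputable section

/-- Vertices of `G(t; k₁,…,k_t)`: `none` is the hub `w`; `some (Sum.inl ⟨i, j⟩)` is the
`j`-th vertex of the `i`-th cycle `C_{3kᵢ+1}` (vertex `0` is joined to `w`);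
`some (Sum.inr ⟨i, p⟩)` is the pendant vertex attached to cycle vertex `p + 1`. -/
abbrev GVert (t : ℕ) (k : Fin t → ℕ) : Type :=
  Option ((Σ i : Fin t, Fin (3 * k i + 1)) ⊕ (Σ i : Fin t, Fin (3 * k i)))

/-- The counterexample graph `G(t; k₁,…,k_t)`. -/
def GG (t : ℕ) (k : Fin t → ℕ) : SimpleGraph (GVert t k) :=
  SimpleGraph.fromRel (fun a b =>
    match a, b with
    | none, some (Sum.inl ⟨_, j⟩) => (j : ℕ) = 0
    | some (Sum.inl ⟨i, a⟩), some (Sum.inl ⟨i', b⟩) =>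
        i = i' ∧ ((b : ℕ) = (a : ℕ) + 1 ∨ ((a : ℕ) = 3 * k i ∧ (b : ℕ) = 0))
    | some (Sum.inl ⟨i, a⟩), some (Sum.inr ⟨i', p⟩) => i = i' ∧ (a : ℕ) = (p : ℕ) + 1
    | _, _ => False)

/-! The hub has degree `t`, the `4t` cycle vertices degree `3` and the `3t` pendants degree `1`,
so `m = 8t`. An annihilation set pays at least `1` per pendant and at least `3` per other vertex
(the hub has degree `t ≥ 3`), whence `3|S| ≤ 8t + 2 · 3t`; all pendants together with
`⌊5t/3⌋` cycle vertices attain this bound.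

A 2-dominating set contains every pendant. Every cycle vertex has only one neighbour off its
cycle, so a 2-dominating set dominates each 4-cycle inside the cycle and therefore meets it in at
least two vertices: `γ₂ ≥ 3t + 2t`. The pendants together with two opposite vertices of each cycle
(those at positions `0` and `2`) attain this bound. -/

section General

variable {V : Type*} [Fintype V] {G : SimpleGraph V} {S : Finset V}

lemma two_le_card_neighborFinset_inter_of_adj {v a b : V} (ha : G.Adj v a) (hb : G.Adj v b)
    (hab : a ≠ b) (haS : a ∈ S) (hbS : b ∈ S) : 2 ≤ (G.neighborFinset v ∩ S).card := by
  have hsub : {a, b} ⊆ G.neighborFinset v ∩ S := by simp [insert_subset_iff, *]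
  simpa [card_pair hab] using card_le_card hsub

lemma IsTwoDomSet.mem_of_degree_le_one (hS : IsTwoDomSet G S) {v : V} (hv : G.degree v ≤ 1) :
    v ∈ S := by
  by_contra hvS
  have := (hS v hvS).trans (card_le_card inter_subset_left)
  rw [SimpleGraph.card_neighborFinset_eq_degree] at this
  omega

lemma IsTwoDomSet.mem_or_mem_of_degree_le_three (hS : IsTwoDomSet G S) {v a b : V} (hvS : v ∉ S)
    (hv : G.degree v ≤ 3) (ha : G.Adj v a) (hb : G.Adj v b) (hab : a ≠ b) : a ∈ S ∨ b ∈ S := by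
  by_contra! habS
  have hsub : G.neighborFinset v ∩ S ⊆ G.neighborFinset v \ {a, b} := by
    intro u hu
    simp only [mem_inter, mem_sdiff, mem_insert, mem_singleton] at hu ⊢
    exact ⟨hu.1, by rintro (rfl | rfl) <;> simp_all⟩
  have hab_sub : {a, b} ⊆ G.neighborFinset v := by simp [insert_subset_iff, ha, hb]
  have := (hS v hvS).trans (card_le_card hsub)
  rw [card_sdiff_of_subset hab_sub, card_pair hab,
    SimpleGraph.card_neighborFinset_eq_degree] at this
  omega

lemma gamma2_eq_card (hS : IsTwoDomSet G S) (hmin : ∀ T, IsTwoDomSet G T → S.card ≤ T.card) :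
    gamma2 G = S.card :=
  le_antisymm (Nat.sInf_le ⟨S, hS, rfl⟩)
    (le_csInf ⟨_, S, hS, rfl⟩ fun _ ⟨T, hT, hk⟩ => hk ▸ hmin T hT)

lemma annihilation_eq_card (hS : IsAnnSet G S) (hmax : ∀ T, IsAnnSet G T → T.card ≤ S.card) :
    annihilation G = S.card :=
  le_antisymm (csSup_le ⟨_, S, hS, rfl⟩ fun _ ⟨T, hT, hk⟩ => hk ▸ hmax T hT)
    (le_csSup ⟨S.card, fun _ ⟨T, hT, hk⟩ => hk ▸ hmax T hT⟩ ⟨S, hS, rfl⟩)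

lemma IsAnnSet.three_mul_card_le {L : Finset V} (hS : IsAnnSet G S)
    (hL : ∀ v ∈ L, 1 ≤ G.degree v) (hnotL : ∀ v ∉ L, 3 ≤ G.degree v) :
    3 * S.card ≤ G.edgeFinset.card + 2 * L.card := by
  have hpt : ∀ v ∈ S, 3 ≤ G.degree v + 2 * if v ∈ L then 1 else 0 := fun v _ => by
    split_ifs with hv
    · linarith [hL v hv]
    · linarith [hnotL v hv]
  calc 3 * S.card = ∑ _v ∈ S, 3 := by rw [sum_const, smul_eq_mul, mul_comm]
    _ ≤ ∑ v ∈ S, (G.degree v + 2 * if v ∈ L then 1 else 0) := sum_le_sum hpt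
    _ = ∑ v ∈ S, G.degree v + 2 * (S.filter (· ∈ L)).card := by
      rw [sum_add_distrib, ← mul_sum, sum_boole, Nat.cast_id]
    _ ≤ G.edgeFinset.card + 2 * L.card := by
      gcongr
      · exact hS
      · exact fun v hv => (mem_filter.1 hv).2

lemma two_le_card_of_dominates_cycle_four (s : Finset (Fin 4))
    (hs : ∀ j ∉ s, j + 1 ∈ s ∨ j - 1 ∈ s) : 2 ≤ s.card := by
  revert s
  decide

end General

namespace GG

abbrev V (t : ℕ) := GVert t fun _ => 1
abbrev G (t : ℕ) : SimpleGraph (V t) := GG t fun _ => 1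

variable {t : ℕ}

abbrev hub : V t := none
abbrev cyc (i : Fin t) (j : Fin 4) : V t := some (.inl ⟨i, j⟩)
abbrev pend (i : Fin t) (p : Fin 3) : V t := some (.inr ⟨i, p⟩)

@[simp] lemma cyc_inj {i i' : Fin t} {j j' : Fin 4} : cyc i j = cyc i' j' ↔ i = i' ∧ j = j' := by
  simp [Sigma.ext_iff]

@[simp] lemma pend_inj {i i' : Fin t} {p p' : Fin 3} : pend i p = pend i' p' ↔ i = i' ∧ p = p' := by
  simp [Sigma.ext_iff]

@[simp] lemma adj_hub_cyc {i : Fin t} {j : Fin 4} : (G t).Adj hub (cyc i j) ↔ j = 0 := by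
  simp [GG, Fin.val_eq_zero_iff]

@[simp] lemma adj_cyc_cyc {i i' : Fin t} {j j' : Fin 4} :
    (G t).Adj (cyc i j) (cyc i' j') ↔ i = i' ∧ (j' = j + 1 ∨ j' = j - 1) := by
  simp only [GG, SimpleGraph.fromRel_adj, ne_eq, cyc_inj, eq_sub_iff_add_eq, Fin.ext_iff,
    Fin.val_add]
  omega

@[simp] lemma adj_cyc_pend {i i' : Fin t} {j : Fin 4} {p : Fin 3} :
    (G t).Adj (cyc i j) (pend i' p) ↔ i = i' ∧ (j : ℕ) = p + 1 := by
  simp [GG]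

@[simp] lemma not_adj_hub_pend {i : Fin t} {p : Fin 3} : ¬ (G t).Adj hub (pend i p) := by
  simp [GG]

@[simp] lemma not_adj_pend_pend {i i' : Fin t} {p p' : Fin 3} :
    ¬ (G t).Adj (pend i p) (pend i' p') := by
  simp [GG]

@[simp] lemma adj_cyc_hub {i : Fin t} {j : Fin 4} : (G t).Adj (cyc i j) hub ↔ j = 0 := by
  rw [SimpleGraph.adj_comm, adj_hub_cyc]

@[simp] lemma adj_pend_cyc {i i' : Fin t} {j : Fin 4} {p : Fin 3} :
    (G t).Adj (pend i p) (cyc i' j) ↔ i' = i ∧ (j : ℕ) = p + 1 := by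
  rw [SimpleGraph.adj_comm, adj_cyc_pend, eq_comm]

@[simp] lemma not_adj_pend_hub {i : Fin t} {p : Fin 3} : ¬ (G t).Adj (pend i p) hub := by
  rw [SimpleGraph.adj_comm]; exact not_adj_hub_pend

def offCycleNeighbor (i : Fin t) : Fin 4 → V t := Fin.cases hub (pend i)

lemma neighborFinset_pend (i : Fin t) (p : Fin 3) :
    (G t).neighborFinset (pend i p) = {cyc i p.succ} := by
  ext (_ | ⟨i', j⟩ | ⟨i', p'⟩) <;> simp [Fin.ext_iff, eq_comm]

lemma neighborFinset_hub : (G t).neighborFinset hub = univ.image (cyc · 0) := by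
  ext (_ | ⟨i', j⟩ | ⟨i', p'⟩) <;> simp [eq_comm]

lemma neighborFinset_cyc (i : Fin t) (j : Fin 4) :
    (G t).neighborFinset (cyc i j) = {cyc i (j + 1), cyc i (j - 1), offCycleNeighbor i j} := by
  cases j using Fin.cases <;> ext (_ | ⟨i', j'⟩ | ⟨i', p'⟩) <;>
    simp [offCycleNeighbor, and_or_left, eq_comm, Fin.val_inj]

lemma degree_pend (i : Fin t) (p : Fin 3) : (G t).degree (pend i p) = 1 := by
  rw [← SimpleGraph.card_neighborFinset_eq_degree, neighborFinset_pend, card_singleton]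

lemma degree_hub : (G t).degree hub = t := by
  rw [← SimpleGraph.card_neighborFinset_eq_degree, neighborFinset_hub,
    card_image_of_injective _ fun _ _ h => (cyc_inj.1 h).1, card_univ, Fintype.card_fin]

lemma degree_cyc (i : Fin t) (j : Fin 4) : (G t).degree (cyc i j) = 3 := by
  rw [← SimpleGraph.card_neighborFinset_eq_degree, neighborFinset_cyc]
  cases j using Fin.cases with
  | zero => simp +decide [offCycleNeighbor, card_insert_of_notMem]
  | succ p =>
    simp only [offCycleNeighbor, Fin.cases_succ]
    fin_cases p <;> simp +decide [card_insert_of_notMem]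

lemma card_edgeFinset : (G t).edgeFinset.card = 8 * t := by
  have h := (G t).sum_degrees_eq_twice_card_edges
  simp only [Fintype.sum_option, Fintype.sum_sum_type, Fintype.sum_sigma] at h
  simp [degree_hub, degree_cyc, degree_pend] at h
  omega

def pendants : Finset (V t) := univ.image (some ∘ Sum.inr)

def cycleVertices : Finset (V t) := univ.image (some ∘ Sum.inl)

lemma card_pendants : (pendants : Finset (V t)).card = 3 * t := by
  rw [pendants, card_image_of_injective _ (Option.some_injective _ |>.comp Sum.inr_injective)]
  simp [mul_comm]

lemma card_cycleVertices : (cycleVertices : Finset (V t)).card = 4 * t := by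
  rw [cycleVertices, card_image_of_injective _ (Option.some_injective _ |>.comp Sum.inl_injective)]
  simp [mul_comm]

lemma disjoint_pendants_cycleVertices : Disjoint (pendants : Finset (V t)) cycleVertices := by
  rw [disjoint_left]
  rintro _ hp hc
  obtain ⟨_, -, rfl⟩ := mem_image.1 hp
  obtain ⟨_, -, h⟩ := mem_image.1 hc
  simp at h

lemma degree_of_mem_pendants {v : V t} (hv : v ∈ pendants) : (G t).degree v = 1 := by
  obtain ⟨⟨i, p⟩, -, rfl⟩ := mem_image.1 hv
  exact degree_pend i p

lemma degree_of_mem_cycleVertices {v : V t} (hv : v ∈ cycleVertices) : (G t).degree v = 3 := by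
  obtain ⟨⟨i, j⟩, -, rfl⟩ := mem_image.1 hv
  exact degree_cyc i j

lemma exists_isAnnSet_card_eq :
    ∃ S : Finset (V t), IsAnnSet (G t) S ∧ S.card = 4 * t + 2 * t / 3 := by
  obtain ⟨C, hC, hCcard⟩ := exists_subset_card_eq (s := (cycleVertices : Finset (V t)))
    (n := 5 * t / 3) (by rw [card_cycleVertices]; omega)
  have hdisj := disjoint_pendants_cycleVertices.mono_right hC
  refine ⟨pendants ∪ C, ?_, by rw [card_union_of_disjoint hdisj, card_pendants, hCcard]; omega⟩
  rw [IsAnnSet, sum_union hdisj, sum_congr rfl fun v hv => degree_of_mem_pendants hv,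
    sum_congr rfl fun v hv => degree_of_mem_cycleVertices (hC hv), card_edgeFinset]
  simp only [sum_const, card_pendants, hCcard, smul_eq_mul]
  omega

lemma card_le_of_isAnnSet (ht : 3 ≤ t) {S : Finset (V t)} (hS : IsAnnSet (G t) S) :
    S.card ≤ 4 * t + 2 * t / 3 := by
  have h := hS.three_mul_card_le (L := pendants) (fun v hv => (degree_of_mem_pendants hv).ge)
    (fun v hv => by
      rcases v with _ | ⟨i, j⟩ | ⟨i, p⟩
      · rw [degree_hub]; exact ht
      · rw [degree_cyc]
      · simp [pendants] at hv)
  rw [card_edgeFinset, card_pendants] at h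
  omega

lemma annihilation_eq (ht : 3 ≤ t) : annihilation (G t) = 4 * t + 2 * t / 3 := by
  obtain ⟨S, hS, hcard⟩ := exists_isAnnSet_card_eq (t := t)
  rw [← hcard]
  exact annihilation_eq_card hS fun T hT => hcard ▸ card_le_of_isAnnSet ht hT

def gadget : V t → Option (Fin t) := Option.map (Sum.elim Sigma.fst Sigma.fst)

lemma five_le_card_filter_gadget {T : Finset (V t)} (hT : IsTwoDomSet (G t) T) (i : Fin t) :
    5 ≤ (T.filter (gadget · = some i)).card := by
  have hpend (p : Fin 3) : pend i p ∈ T := hT.mem_of_degree_le_one (degree_pend i p).le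
  have hcyc : 2 ≤ (univ.filter (cyc i · ∈ T)).card := by
    refine two_le_card_of_dominates_cycle_four _ fun j hj => ?_
    simp only [mem_filter, mem_univ, true_and] at hj ⊢
    refine hT.mem_or_mem_of_degree_le_three hj (degree_cyc i j).le (by simp) (by simp) ?_
    simp only [ne_eq, cyc_inj, true_and]
    fin_cases j <;> decide
  have hsub : (univ.filter (cyc i · ∈ T)).image (cyc i) ∪ univ.image (pend i) ⊆
      T.filter (gadget · = some i) := by
    intro v hv
    simp only [mem_union, mem_image, mem_filter, mem_univ, true_and] at hv
    rcases hv with ⟨j, hj, rfl⟩ | ⟨p, -, rfl⟩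
    · exact mem_filter.2 ⟨hj, rfl⟩
    · exact mem_filter.2 ⟨hpend p, rfl⟩
  calc 5 ≤ ((univ.filter (cyc i · ∈ T)).image (cyc i) ∪ univ.image (pend i)).card := by
        rw [card_union_of_disjoint (by simp [disjoint_left]),
          card_image_of_injective _ fun _ _ h => (cyc_inj.1 h).2,
          card_image_of_injective _ fun _ _ h => (pend_inj.1 h).2, card_univ, Fintype.card_fin]
        omega
    _ ≤ _ := card_le_card hsub

lemma five_mul_le_card_of_isTwoDomSet {T : Finset (V t)} (hT : IsTwoDomSet (G t) T) :
    5 * t ≤ T.card :=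
  calc 5 * t = ∑ _i : Fin t, 5 := by simp [mul_comm]
    _ ≤ ∑ i, (T.filter (gadget · = some i)).card :=
      sum_le_sum fun i _ => five_le_card_filter_gadget hT i
    _ ≤ ∑ o, (T.filter (gadget · = o)).card := by rw [Fintype.sum_option]; exact le_add_self
    _ = T.card := (card_eq_sum_card_fiberwise fun _ _ => mem_univ _).symm

def twoDomSet : Finset (V t) := pendants ∪ univ.image (cyc · 0) ∪ univ.image (cyc · 2)

lemma card_twoDomSet : (twoDomSet : Finset (V t)).card = 5 * t := by
  rw [twoDomSet, card_union_of_disjoint, card_union_of_disjoint,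
    card_image_of_injective _ fun _ _ h => (cyc_inj.1 h).1,
    card_image_of_injective _ fun _ _ h => (cyc_inj.1 h).1, card_pendants, card_univ,
    Fintype.card_fin]
  · ring
  all_goals
    rw [disjoint_left]
    rintro _ h1 h2
    simp [pendants] at h1 h2
    grind

lemma isTwoDomSet_twoDomSet (ht : 2 ≤ t) : IsTwoDomSet (G t) twoDomSet := by
  rintro (_ | ⟨i, j⟩ | ⟨i, p⟩) hv
  · exact two_le_card_neighborFinset_inter_of_adj (a := cyc ⟨0, by omega⟩ 0)
      (b := cyc ⟨1, by omega⟩ 0) (by simp) (by simp) (by simp) (by simp [twoDomSet])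
      (by simp [twoDomSet])
  · refine two_le_card_neighborFinset_inter_of_adj (a := cyc i (j - 1)) (b := cyc i (j + 1))
      (by simp) (by simp) ?_ ?_ ?_ <;> fin_cases j <;> simp +decide [twoDomSet, pendants] at hv ⊢
  · simp [twoDomSet, pendants] at hv

lemma gamma2_eq (ht : 2 ≤ t) : gamma2 (G t) = 5 * t := by
  rw [← card_twoDomSet]
  exact gamma2_eq_card (isTwoDomSet_twoDomSet ht) fun T hT =>
    card_twoDomSet (t := t) ▸ five_mul_le_card_of_isTwoDomSet hT

end GG

/-- For `t ≥ 4`, the graph `G(t;1,…,1)` satisfies `a(G) = 4t + ⌊2t/3⌋`, `γ₂(G) = 5t`,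
hence `γ₂(G) − a(G) = ⌈t/3⌉`. -/
theorem stmt13 (t : ℕ) (ht : 4 ≤ t) :
    annihilation (GG t fun _ => 1) = 4 * t + 2 * t / 3 ∧
    gamma2 (GG t fun _ => 1) = 5 * t ∧
    gamma2 (GG t fun _ => 1) - annihilation (GG t fun _ => 1) = (t + 2) / 3 := by
  have hann := GG.annihilation_eq (t := t) (by omega)
  have hgamma := GG.gamma2_eq (t := t) (by omega)
  refine ⟨hann, hgamma, ?_⟩
  rw [hann, hgamma]
  omega
end
end
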